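/- The spectral bound is sharp for χ(Z^n, B¹₂) = 2n: choosing coefficients c = 1/(2n−1) on the orbit of 2ϖ₁ and 1−c on the orbit of ϖ₂ (for the root system Cₙ), one has c·T_{2ϖ₁}(z) + (1−c)·T_{ϖ₂}(z) = (2n z₁² − 1)/(2n − 1) ≥ −1/(2n−1) on the Chebyshev image, giving χ(Z^n, B¹₂) ≥ 2n, which matches the known upper bound. -/

import Mathlib

noncomputable section
open scoped BigOperators

abbrev EV (n : ℕ) := EuclideanSpace ℝ (Fin n)

/-- The hyperoctahedral group `Sₙ ⋉ {±1}ⁿ` (the Weyl group of `Bₙ`/`Cₙ`) acting on `ℝⁿ`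
by permutations and sign changes of coordinates. -/
def sgnAct {n : ℕ} (g : Equiv.Perm (Fin n) × (Fin n → Bool)) (μ : EV n) : EV n :=
  WithLp.toLp 2 (fun j => (if g.2 j then (1 : ℝ) else -1) * μ (g.1 j))

/-- The generalized cosine for the Weyl group of `Bₙ`/`Cₙ`. -/
def cGencos {n : ℕ} (μ u : EV n) : ℂ :=
  ((Fintype.card (Equiv.Perm (Fin n) × (Fin n → Bool)) : ℂ))⁻¹ *
    ∑ g : Equiv.Perm (Fin n) × (Fin n → Bool),
      Complex.exp (-(2 * Real.pi * Complex.I) * ((inner ℝ (sgnAct g μ) u : ℝ) : ℂ))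

/-- The fundamental weight `ϖ₁ = e₁` of `Cₙ`. -/
def cϖ₁ {n : ℕ} : EV n := WithLp.toLp 2 (fun j => if (j : ℕ) = 0 then 1 else 0)

/-- The fundamental weight `ϖ₂ = e₁ + e₂` of `Cₙ`/`Bₙ`. -/
def cϖ₂ {n : ℕ} : EV n := WithLp.toLp 2 (fun j => if (j : ℕ) < 2 then 1 else 0)

/-! Summing over the sign changes first turns the generalized cosine `T_μ(u)` into the average
over permutations `σ` of `∏ₖ cos (2π μₖ u_{σ k})`. For weights supported on one or two
coordinates these permutation sums are symmetric functions of `c j = cos (2π u j)`: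

  `n T_{ϖ₁} = ∑ c j`,  `n T_{2ϖ₁} = 2 ∑ (c j)² - n`,  `n (n - 1) T_{ϖ₂} = (∑ c j)² - ∑ (c j)²`.

Eliminating `∑ (c j)²` gives `T_{2ϖ₁} + (2n - 2) T_{ϖ₂} = 2n T_{ϖ₁}² - 1`, which is the Chebyshev
identity, and since `T_{ϖ₁}` is real the combination is at least `-1/(2n-1)`.

The `2n` vectors `±eᵢ` are pairwise at `ℓ¹`-distance `2`, so `2n` colours are necessary. They
suffice: with `L u = ∑ (2i+1) uᵢ`, a step `±eᵢ ± eⱼ` of length `2` changes `L` by `2k` with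
`0 < |k| < 2n`, so `u ↦ ⌊L u / 2⌋ mod 2n` is a proper colouring. -/

open Finset

section PermSums

variable {ι R : Type*} [Fintype ι] [DecidableEq ι] [CommRing R]

lemma sum_perm_apply_eq (f : ι → R) (a b : ι) :
    ∑ σ : Equiv.Perm ι, f (σ a) = ∑ σ : Equiv.Perm ι, f (σ b) :=
  Fintype.sum_equiv (Equiv.mulRight (Equiv.swap a b)) _ _ fun σ => by simp [Equiv.Perm.mul_apply]

lemma card_mul_sum_perm_apply (f : ι → R) (a : ι) :
    (Fintype.card ι : R) * ∑ σ : Equiv.Perm ι, f (σ a)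
      = (Fintype.card ι).factorial * ∑ j, f j := by
  calc (Fintype.card ι : R) * ∑ σ : Equiv.Perm ι, f (σ a)
      = ∑ b : ι, ∑ σ : Equiv.Perm ι, f (σ b) := by
        rw [Finset.sum_congr rfl fun b _ => (sum_perm_apply_eq f a b).symm, Finset.sum_const,
          Finset.card_univ, nsmul_eq_mul]
    _ = ∑ σ : Equiv.Perm ι, ∑ j, f j :=
        Finset.sum_comm.trans (Finset.sum_congr rfl fun σ _ => Equiv.sum_comp σ f)
    _ = _ := by simp [Fintype.card_perm]

lemma sum_perm_apply_mul_apply_eq (f g : ι → R) {a b c : ι} (hb : b ≠ a) (hc : c ≠ a) :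
    ∑ σ : Equiv.Perm ι, f (σ a) * g (σ b) = ∑ σ : Equiv.Perm ι, f (σ a) * g (σ c) :=
  Fintype.sum_equiv (Equiv.mulRight (Equiv.swap b c)) _ _ fun σ => by
    simp [Equiv.swap_apply_of_ne_of_ne hb.symm hc.symm]

lemma card_mul_card_sub_one_mul_sum_perm_apply_mul_apply (f g : ι → R) {a b : ι}
    (hab : a ≠ b) :
    (Fintype.card ι : R) * (Fintype.card ι - 1) * ∑ σ : Equiv.Perm ι, f (σ a) * g (σ b)
      = (Fintype.card ι).factorial * ((∑ j, f j) * (∑ j, g j) - ∑ j, f j * g j) := by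
  have hoff : ((Fintype.card ι : R) - 1) * ∑ σ : Equiv.Perm ι, f (σ a) * g (σ b)
      = ∑ σ : Equiv.Perm ι, f (σ a) * ((∑ j, g j) - g (σ a)) := by
    calc ((Fintype.card ι : R) - 1) * ∑ σ : Equiv.Perm ι, f (σ a) * g (σ b)
        = ∑ k ∈ univ.erase a, ∑ σ : Equiv.Perm ι, f (σ a) * g (σ k) := by
          rw [Finset.sum_congr rfl fun k hk =>
            sum_perm_apply_mul_apply_eq f g (Finset.ne_of_mem_erase hk) hab.symm]
          simp [Finset.card_erase_of_mem, Finset.card_univ,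
            Nat.cast_pred (Fintype.card_pos_iff.mpr ⟨a⟩)]
      _ = ∑ σ : Equiv.Perm ι, f (σ a) * ((∑ j, g j) - g (σ a)) := by
          rw [Finset.sum_comm]
          refine Finset.sum_congr rfl fun σ _ => ?_
          rw [← Finset.mul_sum, Finset.sum_erase_eq_sub (Finset.mem_univ a),
            Equiv.sum_comp σ g]
  calc (Fintype.card ι : R) * (Fintype.card ι - 1) * ∑ σ : Equiv.Perm ι, f (σ a) * g (σ b)
      = (Fintype.card ι : R) * ∑ σ : Equiv.Perm ι, f (σ a) * (∑ j, g j)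
          - (Fintype.card ι : R) * ∑ σ : Equiv.Perm ι, (fun j => f j * g j) (σ a) := by
        rw [mul_assoc, hoff, ← mul_sub, ← Finset.sum_sub_distrib]
        simp only [mul_sub]
    _ = _ := by
        rw [← Finset.sum_mul, ← mul_assoc, card_mul_sum_perm_apply,
          card_mul_sum_perm_apply (fun j => f j * g j)]
        ring

end PermSums

section Gencos

open Complex

variable {n : ℕ}

lemma inner_sgnAct (g : Equiv.Perm (Fin n) × (Fin n → Bool)) (μ u : EV n) :
    inner ℝ (sgnAct g μ) u = ∑ j, (if g.2 j then (1 : ℝ) else -1) * (μ (g.1 j) * u j) := by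
  simp [sgnAct, PiLp.inner_apply, mul_comm]

lemma sum_bool_exp_sign_mul (x : ℝ) :
    ∑ b : Bool, exp (-(2 * Real.pi * I) * (((if b then (1 : ℝ) else -1) * x : ℝ) : ℂ))
      = 2 * (Real.cos (2 * Real.pi * x) : ℂ) := by
  simp only [Fintype.sum_bool, ↓reduceIte, Bool.false_eq_true]
  rw [Complex.ofReal_cos, Complex.two_cos]
  push_cast
  ring_nf

lemma cGencos_eq_sum_prod_cos (μ u : EV n) :
    cGencos μ u = (n.factorial : ℂ)⁻¹ *
      ∑ σ : Equiv.Perm (Fin n), ∏ k, (Real.cos (2 * Real.pi * (μ k * u (σ k))) : ℂ) := by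
  have hsigns : ∀ σ : Equiv.Perm (Fin n),
      ∑ ε : Fin n → Bool, exp (-(2 * Real.pi * I) * ((inner ℝ (sgnAct (σ, ε) μ) u : ℝ) : ℂ))
        = 2 ^ n * ∏ j, (Real.cos (2 * Real.pi * (μ (σ j) * u j)) : ℂ) := by
    intro σ
    simp_rw [inner_sgnAct, Complex.ofReal_sum, Finset.mul_sum, Complex.exp_sum]
    rw [← Fintype.prod_sum (fun j (b : Bool) => exp (-(2 * Real.pi * I) *
      (((if b then (1 : ℝ) else -1) * (μ (σ j) * u j) : ℝ) : ℂ)))]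
    simp_rw [sum_bool_exp_sign_mul, Finset.prod_mul_distrib, Finset.prod_const,
      Finset.card_univ, Fintype.card_fin]
  have hreindex : ∀ σ : Equiv.Perm (Fin n),
      ∏ j, (Real.cos (2 * Real.pi * (μ (σ j) * u j)) : ℂ)
        = ∏ k, (Real.cos (2 * Real.pi * (μ k * u (σ⁻¹ k))) : ℂ) :=
    fun σ => Fintype.prod_equiv σ _ _ fun j => by simp
  rw [cGencos, Fintype.sum_prod_type, Finset.sum_congr rfl fun σ _ => hsigns σ,
    Finset.sum_congr rfl fun σ _ => congrArg _ (hreindex σ), ← Finset.mul_sum,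
    ← Equiv.sum_comp (Equiv.inv (Equiv.Perm (Fin n)))]
  simp only [Fintype.card_prod, Fintype.card_perm, Fintype.card_fun, Fintype.card_fin,
    Fintype.card_bool, Equiv.inv_apply, inv_inv]
  rw [Nat.cast_mul, mul_inv, Nat.cast_pow, Nat.cast_ofNat, mul_assoc,
    inv_mul_cancel_left₀ (pow_ne_zero n two_ne_zero)]

lemma natCast_mul_cGencos_of_support_single {μ : EV n} (a : Fin n) (hμ : ∀ k ≠ a, μ k = 0)
    (u : EV n) :
    (n : ℂ) * cGencos μ u = ∑ j, (Real.cos (2 * Real.pi * (μ a * u j)) : ℂ) := by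
  have hperm := card_mul_sum_perm_apply (R := ℂ)
    (fun j => (Real.cos (2 * Real.pi * (μ a * u j)) : ℂ)) a
  rw [Fintype.card_fin] at hperm
  have hprod : ∀ σ : Equiv.Perm (Fin n),
      ∏ k, (Real.cos (2 * Real.pi * (μ k * u (σ k))) : ℂ)
        = Real.cos (2 * Real.pi * (μ a * u (σ a))) :=
    fun σ => Fintype.prod_eq_single a fun k hk => by simp [hμ k hk]
  rw [cGencos_eq_sum_prod_cos, mul_left_comm, Finset.sum_congr rfl fun σ _ => hprod σ]
  rw [hperm, inv_mul_cancel_left₀ (Nat.cast_ne_zero.mpr n.factorial_ne_zero)]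

lemma natCast_mul_sub_one_mul_cGencos_of_support_pair {μ : EV n} {a b : Fin n} (hab : a ≠ b)
    (hμ : ∀ k, k ≠ a ∧ k ≠ b → μ k = 0) (u : EV n) :
    (n : ℂ) * (n - 1) * cGencos μ u
      = (∑ j, (Real.cos (2 * Real.pi * (μ a * u j)) : ℂ))
          * (∑ j, (Real.cos (2 * Real.pi * (μ b * u j)) : ℂ))
        - ∑ j, (Real.cos (2 * Real.pi * (μ a * u j)) : ℂ)
          * (Real.cos (2 * Real.pi * (μ b * u j)) : ℂ) := by
  have hperm := card_mul_card_sub_one_mul_sum_perm_apply_mul_apply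
    (fun j => (Real.cos (2 * Real.pi * (μ a * u j)) : ℂ))
    (fun j => (Real.cos (2 * Real.pi * (μ b * u j)) : ℂ)) hab
  rw [Fintype.card_fin] at hperm
  have hprod : ∀ σ : Equiv.Perm (Fin n),
      ∏ k, (Real.cos (2 * Real.pi * (μ k * u (σ k))) : ℂ)
        = Real.cos (2 * Real.pi * (μ a * u (σ a))) * Real.cos (2 * Real.pi * (μ b * u (σ b))) :=
    fun σ => Fintype.prod_eq_mul a b hab fun k hk => by simp [hμ k hk]
  rw [cGencos_eq_sum_prod_cos, mul_left_comm, Finset.sum_congr rfl fun σ _ => hprod σ]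
  rw [hperm, inv_mul_cancel_left₀ (Nat.cast_ne_zero.mpr n.factorial_ne_zero)]

lemma cϖ₁_apply_of_ne (hn : 0 < n) {k : Fin n} (hk : k ≠ ⟨0, hn⟩) : (cϖ₁ : EV n) k = 0 := by
  simp only [Ne, Fin.ext_iff] at hk
  simp [cϖ₁, hk]

lemma natCast_mul_cGencos_cϖ₁ (hn : 0 < n) (u : EV n) :
    (n : ℂ) * cGencos cϖ₁ u = ∑ j, (Real.cos (2 * Real.pi * u j) : ℂ) := by
  rw [natCast_mul_cGencos_of_support_single ⟨0, hn⟩ fun k hk => cϖ₁_apply_of_ne hn hk]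
  simp [cϖ₁]

lemma natCast_mul_cGencos_two_smul_cϖ₁ (hn : 0 < n) (u : EV n) :
    (n : ℂ) * cGencos ((2 : ℝ) • cϖ₁) u
      = 2 * ∑ j, (Real.cos (2 * Real.pi * u j) : ℂ) ^ 2 - n := by
  rw [natCast_mul_cGencos_of_support_single ⟨0, hn⟩ fun k hk => by
    simp [cϖ₁_apply_of_ne hn hk]]
  have hμ : ((2 : ℝ) • cϖ₁ : EV n) ⟨0, hn⟩ = 2 := by simp [cϖ₁]
  simp_rw [hμ, mul_left_comm _ (2 : ℝ), Real.cos_two_mul]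
  push_cast
  rw [Finset.sum_sub_distrib, Finset.mul_sum]
  simp

lemma natCast_mul_sub_one_mul_cGencos_cϖ₂ (u : EV n) :
    (n : ℂ) * (n - 1) * cGencos cϖ₂ u
      = (∑ j, (Real.cos (2 * Real.pi * u j) : ℂ)) ^ 2
        - ∑ j, (Real.cos (2 * Real.pi * u j) : ℂ) ^ 2 := by
  match n with
  | 0 => simp
  | 1 => simp
  | m + 2 =>
    rw [natCast_mul_sub_one_mul_cGencos_of_support_pair (a := 0) (b := 1) (by simp)
      fun k hk => ?_]
    · simp [cϖ₂, sq]
    · obtain ⟨h0, h1⟩ := hk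
      rw [Ne, Fin.ext_iff, Fin.val_zero] at h0
      rw [Ne, Fin.ext_iff, Fin.val_one] at h1
      simp [cϖ₂]
      omega

lemma cGencos_two_smul_cϖ₁_add_cGencos_cϖ₂ (hn : 0 < n) (u : EV n) :
    cGencos ((2 : ℝ) • cϖ₁) u + (2 * n - 2) * cGencos cϖ₂ u
      = 2 * n * cGencos cϖ₁ u ^ 2 - 1 := by
  have h₁ := natCast_mul_cGencos_cϖ₁ hn u
  have h₂ := natCast_mul_cGencos_two_smul_cϖ₁ hn u
  have h₃ := natCast_mul_sub_one_mul_cGencos_cϖ₂ u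
  have hn' : (n : ℂ) ≠ 0 := Nat.cast_ne_zero.mpr hn.ne'
  refine mul_left_cancel₀ hn' (sub_eq_zero.mp ?_)
  linear_combination
    h₂ + 2 * h₃ - 2 * (n * cGencos cϖ₁ u + ∑ j, (Real.cos (2 * Real.pi * u j) : ℂ)) * h₁

lemma two_mul_natCast_sub_one_pos (hn : 0 < n) : (0 : ℝ) < 2 * n - 1 := by
  have : (1 : ℝ) ≤ n := Nat.one_le_cast.mpr hn
  linarith

lemma cGencos_combination_eq (hn : 0 < n) (u : EV n) :
    (1 / (2 * n - 1) : ℂ) * cGencos ((2 : ℝ) • cϖ₁) u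
        + (1 - 1 / (2 * n - 1) : ℂ) * cGencos cϖ₂ u
      = (2 * n * (cGencos cϖ₁ u) ^ 2 - 1) / (2 * n - 1) := by
  have hD : (2 * n - 1 : ℂ) ≠ 0 := by
    exact_mod_cast (two_mul_natCast_sub_one_pos hn).ne'
  rw [← cGencos_two_smul_cϖ₁_add_cGencos_cϖ₂ hn u]
  field_simp
  ring

lemma cGencos_cϖ₁_eq_ofReal (hn : 0 < n) (u : EV n) :
    cGencos cϖ₁ u = (((n : ℝ)⁻¹ * ∑ j, Real.cos (2 * Real.pi * u j) : ℝ) : ℂ) := by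
  rw [← inv_mul_cancel_left₀ (Nat.cast_ne_zero.mpr hn.ne' : (n : ℂ) ≠ 0) (cGencos cϖ₁ u),
    natCast_mul_cGencos_cϖ₁ hn]
  push_cast
  rfl

lemma neg_one_div_le_re_cGencos_combination (hn : 0 < n) (u : EV n) :
    -(1 / (2 * (n : ℝ) - 1)) ≤
      ((1 / (2 * n - 1) : ℂ) * cGencos ((2 : ℝ) • cϖ₁) u
        + (1 - 1 / (2 * n - 1) : ℂ) * cGencos cϖ₂ u).re := by
  set x := (n : ℝ)⁻¹ * ∑ j, Real.cos (2 * Real.pi * u j)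
  have hre : ((2 * n * (x : ℂ) ^ 2 - 1) / (2 * n - 1)).re
      = (2 * n * x ^ 2 - 1) / (2 * n - 1) := by
    norm_cast
  rw [cGencos_combination_eq hn, cGencos_cϖ₁_eq_ofReal hn, hre, ← neg_div]
  gcongr
  · exact (two_mul_natCast_sub_one_pos hn).le
  · linarith [show (0 : ℝ) ≤ 2 * n * x ^ 2 by positivity]

end Gencos

section LOneSphere

variable {ι : Type*} [Fintype ι]

lemma eq_zero_of_sum_natAbs_eq_zero {d : ι → ℤ} (h : ∑ i, (d i).natAbs = 0) : d = 0 := by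
  ext i
  simpa using Finset.sum_eq_zero_iff.mp h i (mem_univ i)

variable [DecidableEq ι]

lemma exists_sum_natAbs_sub_single {d : ι → ℤ} {k : ℕ} (h : ∑ i, (d i).natAbs = k + 1) :
    ∃ i, ∃ a : ℤ, a.natAbs = 1 ∧ ∑ j, ((d - Pi.single i a : ι → ℤ) j).natAbs = k := by
  obtain ⟨i, hi⟩ : ∃ i, d i ≠ 0 := by
    by_contra! hd
    simp [hd] at h
  have hrest : ∀ a : ℤ, ∑ j ∈ univ.erase i, ((d - Pi.single i a : ι → ℤ) j).natAbs
      = ∑ j ∈ univ.erase i, (d j).natAbs :=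
    fun a => Finset.sum_congr rfl fun j hj => by simp [Finset.ne_of_mem_erase hj]
  refine ⟨i, (d i).sign, ?_, ?_⟩
  · exact Int.natAbs_sign_of_ne_zero hi
  · rw [← Finset.add_sum_erase _ _ (mem_univ i), hrest]
    rw [← Finset.add_sum_erase _ _ (mem_univ i)] at h
    rcases hi.lt_or_gt with hneg | hpos
    · simp [Int.sign_eq_neg_one_of_neg hneg]
      omega
    · simp [Int.sign_eq_one_of_pos hpos]
      omega

lemma exists_eq_single_add_single {d : ι → ℤ} (h : ∑ i, (d i).natAbs = 2) :
    ∃ i j a b, a.natAbs = 1 ∧ b.natAbs = 1 ∧ d = Pi.single i a + Pi.single j b := by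
  obtain ⟨i, a, ha, h₁⟩ := exists_sum_natAbs_sub_single h
  obtain ⟨j, b, hb, h₀⟩ := exists_sum_natAbs_sub_single h₁
  refine ⟨i, j, a, b, ha, hb, ?_⟩
  have hzero := eq_zero_of_sum_natAbs_eq_zero h₀
  rwa [sub_sub, sub_eq_zero] at hzero

lemma sum_natAbs_single_sub_single {i j : ι} {s t : ℤˣ} (h : (i, s) ≠ (j, t)) :
    ∑ l, ((Pi.single i (s : ℤ) - Pi.single j (t : ℤ) : ι → ℤ) l).natAbs = 2 := by
  by_cases hij : i = j
  · subst hij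
    have hst : s ≠ t := fun hst => h (by rw [hst])
    rw [Fintype.sum_eq_single i fun l hl => by simp [hl]]
    rcases Int.units_eq_one_or s with rfl | rfl <;>
      rcases Int.units_eq_one_or t with rfl | rfl <;> simp_all
  · rw [Fintype.sum_eq_add i j hij fun l hl => by simp [hl.1, hl.2]]
    simp [hij, Ne.symm hij]

end LOneSphere

section Coloring

variable {n : ℕ}

def oddWeight (d : Fin n → ℤ) : ℤ := ∑ i : Fin n, (2 * (i : ℤ) + 1) * d i

lemma oddWeight_sub (u v : Fin n → ℤ) : oddWeight (u - v) = oddWeight u - oddWeight v := by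
  simp [oddWeight, mul_sub, Finset.sum_sub_distrib]

lemma oddWeight_single_add_single (i j : Fin n) (a b : ℤ) :
    oddWeight (Pi.single i a + Pi.single j b)
      = (2 * (i : ℤ) + 1) * a + (2 * (j : ℤ) + 1) * b := by
  simp [oddWeight, mul_add, Finset.sum_add_distrib, Pi.single_apply]

lemma exists_oddWeight_eq_two_mul {d : Fin n → ℤ} (h : ∑ i, (d i).natAbs = 2) :
    ∃ k, oddWeight d = 2 * k ∧ k ≠ 0 ∧ |k| < 2 * n := by
  obtain ⟨i, j, a, b, ha, hb, rfl⟩ := exists_eq_single_add_single h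
  have hcancel : (i : ℤ) = j → a + b ≠ 0 := by
    intro hij hab
    obtain rfl : i = j := Fin.ext (by exact_mod_cast hij)
    rw [← Pi.single_add, hab, Pi.single_zero] at h
    simp at h
  rw [oddWeight_single_add_single]
  have hi := i.isLt
  have hj := j.isLt
  obtain rfl | rfl : a = 1 ∨ a = -1 := by omega
  all_goals
    obtain rfl | rfl : b = 1 ∨ b = -1 := by omega
  all_goals
    exact ⟨_, (Int.mul_ediv_cancel' (by omega)).symm, by omega, abs_lt.mpr ⟨by omega, by omega⟩⟩

lemma exists_coloring_fin_two_mul (hn : 0 < n) :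
    ∃ C : (Fin n → ℤ) → Fin (2 * n), ∀ u v : Fin n → ℤ,
      (∑ i, (u i - v i).natAbs) = 2 → C u ≠ C v := by
  have : NeZero (2 * n) := ⟨by omega⟩
  refine ⟨fun u => (ZMod.finEquiv (2 * n)).symm (oddWeight u / 2 : ℤ), fun u v h hC => ?_⟩
  obtain ⟨k, hk, hk0, hkn⟩ := exists_oddWeight_eq_two_mul (d := u - v) h
  rw [oddWeight_sub] at hk
  have hdvd := (ZMod.intCast_eq_intCast_iff_dvd_sub _ _ _).mp
    ((ZMod.finEquiv (2 * n)).symm.injective hC)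
  -- `oddWeight u - oddWeight v = 2 * k` is even, so halving commutes with the difference
  rw [show oddWeight v / 2 - oddWeight u / 2 = -k by omega, dvd_neg] at hdvd
  exact hk0 (Int.eq_zero_of_abs_lt_dvd (by exact_mod_cast hdvd) (by exact_mod_cast hkn))

lemma two_mul_le_of_proper_coloring {k : ℕ} (C : (Fin n → ℤ) → Fin k)
    (hC : ∀ u v : Fin n → ℤ, (∑ i, (u i - v i).natAbs) = 2 → C u ≠ C v) : 2 * n ≤ k := by
  have hinj : Function.Injective fun p : Fin n × ℤˣ => C (Pi.single p.1 (p.2 : ℤ)) := by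
    intro p q hpq
    by_contra hne
    exact hC _ _ (sum_natAbs_single_sub_single hne) hpq
  simpa [mul_comm] using Fintype.card_le_of_injective _ hinj

end Coloring

/-- The spectral bound is sharp for `χ(ℤⁿ, B¹₂) = 2n`: with
`c = 1/(2n−1)` on the orbit of `2ϖ₁` and `1 − c` on the orbit of `ϖ₂` (root system `Cₙ`),
one has `c·T_{2ϖ₁} + (1−c)·T_{ϖ₂} = (2n z₁² − 1)/(2n−1) ≥ −1/(2n−1)` on the Chebyshev
image, giving `χ(ℤⁿ, B¹₂) ≥ 2n`, matching the known upper bound. -/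
theorem statement16 {n : ℕ} (hn : 1 ≤ n) :
    -- the Chebyshev identity on the image:
    (∀ u : EV n,
      (1 / (2 * n - 1) : ℂ) * cGencos ((2 : ℝ) • cϖ₁) u
          + (1 - 1 / (2 * n - 1) : ℂ) * cGencos cϖ₂ u
        = (2 * n * (cGencos cϖ₁ u) ^ 2 - 1) / (2 * n - 1)) ∧
    -- the lower bound `−1/(2n−1)` on the image:
    (∀ u : EV n, -(1 / (2 * (n : ℝ) - 1)) ≤
      ((1 / (2 * n - 1) : ℂ) * cGencos ((2 : ℝ) • cϖ₁) u
        + (1 - 1 / (2 * n - 1) : ℂ) * cGencos cϖ₂ u).re) ∧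
    -- `χ(ℤⁿ, B¹₂) = 2n`:
    (∃ C : (Fin n → ℤ) → Fin (2 * n), ∀ u v : Fin n → ℤ,
      (∑ i, (u i - v i).natAbs) = 2 → C u ≠ C v) ∧
    (∀ (k : ℕ) (C : (Fin n → ℤ) → Fin k),
      (∀ u v : Fin n → ℤ, (∑ i, (u i - v i).natAbs) = 2 → C u ≠ C v) → 2 * n ≤ k) :=
  ⟨cGencos_combination_eq hn, neg_one_div_le_re_cGencos_combination hn,
    exists_coloring_fin_two_mul hn, fun _ C hC => two_mul_le_of_proper_coloring C hC⟩
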